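/- Let k, ℓ ∈ ℕ. For every subset A ⊆ ℤ^ℓ there exist a probability space (X, 𝒳, μ), commuting invertible measure-preserving transformations T₁, …, T_ℓ of X, and a measurable set E ∈ 𝒳 such that: (1) d̄(A) = μ(E); and (2) for all vectors n₁, …, n_k ∈ ℤ^ℓ, writing n_i = (n_{i1}, …, n_{iℓ}), one has d̄(A ∩ (A − n₁) ∩ ⋯ ∩ (A − n_k)) ≥ μ(E ∩ (T₁^{n_{11}}⋯T_ℓ^{n_{1ℓ}})^{-1}E ∩ ⋯ ∩ (T₁^{n_{k1}}⋯T_ℓ^{n_{kℓ}})^{-1}E). -/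

import Mathlib

open MeasureTheory Filter ENNReal Topology

/-- The group of measurable self-equivalences of `X`, with multiplication given by
composition of maps: `⇑(g * h) = ⇑g ∘ ⇑h`. -/
instance measurableEquivGroup {X : Type*} [MeasurableSpace X] : Group (X ≃ᵐ X) where
  mul g h := h.trans g
  one := MeasurableEquiv.refl X
  inv := MeasurableEquiv.symm
  mul_assoc _ _ _ := MeasurableEquiv.ext rfl
  one_mul _ := MeasurableEquiv.ext rfl
  mul_one _ := MeasurableEquiv.ext rfl
  inv_mul_cancel g := MeasurableEquiv.ext (funext fun x => g.symm_apply_apply x)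

/-- Upper density of a subset of `ℤ^l`. -/
noncomputable def upperDensityZ (l : ℕ) (A : Set (Fin l → ℤ)) : ℝ :=
  Filter.limsup (fun N : ℕ =>
    (Nat.card {m : Fin l → ℤ // m ∈ A ∧ ∀ i, |m i| ≤ (N : ℤ)} : ℝ) / (2 * (N : ℝ) + 1) ^ l)
    Filter.atTop

/-!
Weight the shifts `T^m 1_A`, `m ∈ [-N, N]^ℓ`, of the point `1_A` of the full shift `{0,1}^{ℤ^ℓ}`
uniformly. The space of probability measures on this compact space is compact, so these
empirical measures converge along any ultrafilter on `ℕ`; we choose one that realises the limsup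
defining `d̄(A)`. The limit `μ` gives a clopen set `C` the limit of the box densities of
`{m | T^m 1_A ∈ C}`. Taking `C = E = {x | x 0 = 1}` gives `μ E = d̄(A)`, and taking
`C = E ∩ ⋂ T^{-nᵢ} E` gives the inequality, since a limit along an ultrafilter finer than `atTop`
is at most the limsup. The boxes form a Følner sequence, so `μ` and `μ ∘ T^{-g}` agree on clopen
sets, which generate the Borel σ-algebra: `μ` is shift invariant.
-/

lemma MonoidHom.list_prod_ofFn_zpow_single {ℓ : ℕ} {G : Type*} [Group G]
    (φ : Multiplicative (Fin ℓ → ℤ) →* G) (n : Fin ℓ → ℤ) :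
    (List.ofFn fun j => φ (.ofAdd (Pi.single j 1)) ^ n j).prod = φ (.ofAdd n) := by
  have hterm : ∀ j, φ (.ofAdd (Pi.single j 1)) ^ n j = φ (.ofAdd (Pi.single j (n j))) :=
    fun j => by rw [← map_zpow, ← ofAdd_zsmul, ← Pi.single_smul', smul_eq_mul, mul_one]
  calc (List.ofFn fun j => φ (.ofAdd (Pi.single j 1)) ^ n j).prod
      = φ (List.ofFn fun j => Multiplicative.ofAdd (Pi.single j (n j))).prod := by
        simp only [hterm, map_list_prod, List.map_ofFn, Function.comp_def]
    _ = φ (.ofAdd n) := by rw [List.prod_ofFn, ← ofAdd_sum, Finset.univ_sum_single]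

lemma borel_eq_generateFrom_isClopen {X : Type*} [TopologicalSpace X] [CompactSpace X]
    [T2Space X] [TotallyDisconnectedSpace X] [SecondCountableTopology X] [MeasurableSpace X]
    [BorelSpace X] :
    ‹MeasurableSpace X› = MeasurableSpace.generateFrom {C | IsClopen C} := by
  rw [BorelSpace.measurable_eq (α := X)]
  exact isTopologicalBasis_isClopen.borel_eq_generateFrom

namespace Furstenberg

open Finset

variable {ℓ : ℕ}

noncomputable def box (ℓ N : ℕ) : Finset (Fin ℓ → ℤ) :=
  Fintype.piFinset fun _ => Icc (-(N : ℤ)) N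

lemma mem_box {N : ℕ} {m : Fin ℓ → ℤ} : m ∈ box ℓ N ↔ ∀ i, |m i| ≤ N := by
  simp only [box, Fintype.mem_piFinset, mem_Icc, abs_le]

lemma card_box (ℓ N : ℕ) : #(box ℓ N) = (2 * N + 1) ^ ℓ := by
  simp only [box, Fintype.card_piFinset, Int.card_Icc, prod_const, card_univ, Fintype.card_fin]
  congr 1
  omega

lemma card_box_pos (ℓ N : ℕ) : 0 < #(box ℓ N) := by
  rw [card_box]
  positivity

lemma box_mono {M N : ℕ} (h : M ≤ N) : box ℓ M ⊆ box ℓ N := fun m hm =>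
  mem_box.2 fun i => (mem_box.1 hm i).trans (by exact_mod_cast h)

lemma add_mem_box {M N : ℕ} {m g : Fin ℓ → ℤ} (hm : m ∈ box ℓ N) (hg : g ∈ box ℓ M) :
    m + g ∈ box ℓ (N + M) :=
  mem_box.2 fun i => (abs_add_le _ _).trans <| by
    push_cast
    exact add_le_add (mem_box.1 hm i) (mem_box.1 hg i)

lemma neg_mem_box {M : ℕ} {g : Fin ℓ → ℤ} (hg : g ∈ box ℓ M) : -g ∈ box ℓ M :=
  mem_box.2 fun i => by simpa using mem_box.1 hg i

lemma exists_mem_box (g : Fin ℓ → ℤ) : ∃ M, g ∈ box ℓ M :=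
  ⟨∑ i, (g i).natAbs, mem_box.2 fun i => by
    rw [Int.abs_eq_natAbs]
    exact_mod_cast single_le_sum (f := fun i => (g i).natAbs) (fun _ _ => Nat.zero_le _)
      (mem_univ i)⟩

open scoped Classical in
noncomputable def boxDensity (P : Set (Fin ℓ → ℤ)) (N : ℕ) : ℝ :=
  #{m ∈ box ℓ N | m ∈ P} / #(box ℓ N)

lemma boxDensity_nonneg (P : Set (Fin ℓ → ℤ)) (N : ℕ) : 0 ≤ boxDensity P N := by
  unfold boxDensity
  positivity

lemma boxDensity_le_one (P : Set (Fin ℓ → ℤ)) (N : ℕ) : boxDensity P N ≤ 1 := by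
  classical
  rw [boxDensity, div_le_one (by exact_mod_cast card_box_pos ℓ N)]
  exact_mod_cast card_filter_le _ _

lemma isBoundedUnder_le_boxDensity (P : Set (Fin ℓ → ℤ)) :
    IsBoundedUnder (· ≤ ·) atTop (boxDensity P) :=
  isBoundedUnder_of ⟨1, boxDensity_le_one P⟩

lemma isCoboundedUnder_le_boxDensity (P : Set (Fin ℓ → ℤ)) :
    IsCoboundedUnder (· ≤ ·) atTop (boxDensity P) :=
  (isBoundedUnder_of ⟨0, boxDensity_nonneg P⟩).isCoboundedUnder_le

lemma upperDensityZ_eq_limsup_boxDensity (P : Set (Fin ℓ → ℤ)) :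
    upperDensityZ ℓ P = limsup (boxDensity P) atTop := by
  classical
  refine congrArg (limsup · atTop) (funext fun N => ?_)
  rw [boxDensity, card_box, ← Nat.card_eq_finsetCard]
  push_cast
  congr 2
  exact Nat.card_congr (Equiv.subtypeEquivRight fun m => by simp [mem_box, and_comm])

open scoped Classical in
lemma card_filter_add_mem_le {M : ℕ} {g : Fin ℓ → ℤ} (hg : g ∈ box ℓ M)
    (P : Set (Fin ℓ → ℤ)) (N : ℕ) :
    #{m ∈ box ℓ N | m + g ∈ P} ≤
      #{m ∈ box ℓ N | m ∈ P} + (#(box ℓ (N + M)) - #(box ℓ N)) := by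
  have hsub : box ℓ N ⊆ box ℓ (N + M) := box_mono (Nat.le_add_right N M)
  calc #{m ∈ box ℓ N | m + g ∈ P}
      ≤ #{m ∈ box ℓ (N + M) | m ∈ P} :=
        card_le_card_of_injOn (· + g)
          (fun m hm => by
            rw [coe_filter] at hm ⊢
            exact ⟨add_mem_box hm.1 hg, hm.2⟩)
          (add_left_injective g).injOn
    _ ≤ #({m ∈ box ℓ N | m ∈ P} ∪ (box ℓ (N + M) \ box ℓ N)) := by
        refine card_le_card fun m hm => ?_
        rw [mem_filter] at hm
        by_cases hmN : m ∈ box ℓ N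
        · exact mem_union_left _ (mem_filter.2 ⟨hmN, hm.2⟩)
        · exact mem_union_right _ (mem_sdiff.2 ⟨hm.1, hmN⟩)
    _ ≤ #{m ∈ box ℓ N | m ∈ P} + (#(box ℓ (N + M)) - #(box ℓ N)) :=
        (card_union_le _ _).trans_eq (by rw [card_sdiff_of_subset hsub])

lemma boxDensity_preimage_add_le {M : ℕ} {g : Fin ℓ → ℤ} (hg : g ∈ box ℓ M)
    (P : Set (Fin ℓ → ℤ)) (N : ℕ) :
    boxDensity ((· + g) ⁻¹' P) N ≤
      boxDensity P N + ((#(box ℓ (N + M)) : ℝ) / #(box ℓ N) - 1) := by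
  classical
  have hpos : (0 : ℝ) < #(box ℓ N) := by exact_mod_cast card_box_pos ℓ N
  have hcard := card_filter_add_mem_le hg P N
  rw [← Nat.cast_le (α := ℝ), Nat.cast_add,
    Nat.cast_sub (card_le_card (box_mono (Nat.le_add_right N M)))] at hcard
  have herr : (#(box ℓ (N + M)) : ℝ) / #(box ℓ N) - 1 =
      (#(box ℓ (N + M)) - #(box ℓ N)) / #(box ℓ N) := by
    field_simp
  rw [boxDensity, boxDensity, herr, ← add_div, div_le_div_iff_of_pos_right hpos]
  exact hcard

lemma tendsto_card_box_add_div_card_box (ℓ M : ℕ) :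
    Tendsto (fun N => (#(box ℓ (N + M)) : ℝ) / #(box ℓ N)) atTop (𝓝 1) := by
  have hden : Tendsto (fun N : ℕ => 2 * (N : ℝ) + 1) atTop atTop :=
    tendsto_atTop_add_const_right _ _
      ((tendsto_natCast_atTop_atTop (R := ℝ)).const_mul_atTop two_pos)
  have hratio : Tendsto (fun N : ℕ => 1 + 2 * (M : ℝ) / (2 * N + 1)) atTop (𝓝 1) := by
    simpa using (tendsto_const_nhds (x := 2 * (M : ℝ)).div_atTop hden).const_add 1
  have hpow := hratio.pow ℓ
  rw [one_pow] at hpow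
  refine hpow.congr fun N => ?_
  rw [card_box, card_box, Nat.cast_pow, Nat.cast_pow, ← div_pow]
  congr 1
  field_simp
  push_cast
  ring

lemma tendsto_boxDensity_preimage_add_sub (P : Set (Fin ℓ → ℤ)) (g : Fin ℓ → ℤ) :
    Tendsto (fun N => boxDensity ((· + g) ⁻¹' P) N - boxDensity P N) atTop (𝓝 0) := by
  obtain ⟨M, hg⟩ := exists_mem_box g
  have herr : Tendsto (fun N => (#(box ℓ (N + M)) : ℝ) / #(box ℓ N) - 1) atTop (𝓝 0) := by
    simpa using (tendsto_card_box_add_div_card_box ℓ M).sub_const 1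
  refine squeeze_zero_norm (fun N => abs_sub_le_iff.2 ⟨?_, ?_⟩) herr
  · linarith [boxDensity_preimage_add_le hg P N]
  · have h := boxDensity_preimage_add_le (neg_mem_box hg) ((· + g) ⁻¹' P) N
    simp only [← Set.preimage_comp, Function.comp_def, neg_add_cancel_right,
      Set.preimage_id'] at h
    linarith

abbrev FullShift (ℓ : ℕ) : Type := (Fin ℓ → ℤ) → Bool

def shift (g : Fin ℓ → ℤ) : FullShift ℓ ≃ᵐ FullShift ℓ where
  toFun x p := x (p + g)
  invFun x p := x (p - g)
  left_inv x := funext fun p => by simp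
  right_inv x := funext fun p => by simp
  measurable_toFun := measurable_pi_lambda _ fun p => measurable_pi_apply (p + g)
  measurable_invFun := measurable_pi_lambda _ fun p => measurable_pi_apply (p - g)

lemma continuous_shift (g : Fin ℓ → ℤ) : Continuous (shift g) :=
  continuous_pi fun p => continuous_apply (p + g)

noncomputable def shiftHom (ℓ : ℕ) :
    Multiplicative (Fin ℓ → ℤ) →* (FullShift ℓ ≃ᵐ FullShift ℓ) where
  toFun g := shift g.toAdd
  map_one' := MeasurableEquiv.ext (funext fun x => funext fun p => congrArg x (add_zero p))
  map_mul' _ _ := MeasurableEquiv.ext (funext fun x => funext fun p =>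
    congrArg x (add_assoc p _ _).symm)

lemma shiftHom_ofAdd (g : Fin ℓ → ℤ) : shiftHom ℓ (.ofAdd g) = shift g := rfl

def zeroCylinder (ℓ : ℕ) : Set (FullShift ℓ) := {x | x 0 = true}

lemma isClopen_zeroCylinder : IsClopen (zeroCylinder ℓ) :=
  (isClopen_discrete {true}).preimage (continuous_apply 0)

open scoped Classical in
noncomputable def shiftedIndicator (A : Set (Fin ℓ → ℤ)) (a : Fin ℓ → ℤ) : FullShift ℓ :=
  fun p => decide (p + a ∈ A)

lemma shift_shiftedIndicator (A : Set (Fin ℓ → ℤ)) (a g : Fin ℓ → ℤ) :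
    shift g (shiftedIndicator A a) = shiftedIndicator A (a + g) :=
  funext fun p => decide_eq_decide.2 (by rw [add_comm a g, add_assoc])

lemma shiftedIndicator_preimage_zeroCylinder (A : Set (Fin ℓ → ℤ)) :
    shiftedIndicator A ⁻¹' zeroCylinder ℓ = A := by
  ext a
  simp [shiftedIndicator, zeroCylinder]

lemma shiftedIndicator_preimage_shift_preimage (A : Set (Fin ℓ → ℤ)) (g : Fin ℓ → ℤ)
    (C : Set (FullShift ℓ)) :
    shiftedIndicator A ⁻¹' (shift g ⁻¹' C) = (· + g) ⁻¹' (shiftedIndicator A ⁻¹' C) := by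
  ext a
  simp only [Set.mem_preimage, shift_shiftedIndicator]

noncomputable def empiricalMeasure (A : Set (Fin ℓ → ℤ)) (N : ℕ) :
    ProbabilityMeasure (FullShift ℓ) :=
  ⟨((PMF.uniformOfFinset (box ℓ N) (card_pos.1 (card_box_pos ℓ N))).map
    (shiftedIndicator A)).toMeasure, inferInstance⟩

lemma empiricalMeasure_real_apply (A : Set (Fin ℓ → ℤ)) (N : ℕ) {C : Set (FullShift ℓ)}
    (hC : MeasurableSet C) :
    (empiricalMeasure A N : Measure (FullShift ℓ)).real C =
      boxDensity (shiftedIndicator A ⁻¹' C) N := by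
  rw [measureReal_def, empiricalMeasure, ProbabilityMeasure.coe_mk,
    PMF.toMeasure_apply_eq_toOuterMeasure_apply _ hC, PMF.toOuterMeasure_map_apply,
    PMF.toOuterMeasure_uniformOfFinset_apply, ENNReal.toReal_div, ENNReal.toReal_natCast,
    ENNReal.toReal_natCast, boxDensity]

section Limit

variable {A : Set (Fin ℓ → ℤ)} {U : Filter ℕ} {μ : ProbabilityMeasure (FullShift ℓ)}

lemma tendsto_boxDensity_of_tendsto_empiricalMeasure
    (hμ : Tendsto (empiricalMeasure A) U (𝓝 μ)) {C : Set (FullShift ℓ)} (hC : IsClopen C) :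
    Tendsto (boxDensity (shiftedIndicator A ⁻¹' C)) U
      (𝓝 ((μ : Measure (FullShift ℓ)).real C)) := by
  rw [ProbabilityMeasure.measureReal_eq_coe_coeFn]
  refine (NNReal.tendsto_coe.2
    (ProbabilityMeasure.tendsto_measure_of_isClopen_of_tendsto hμ hC)).congr fun N => ?_
  rw [← ProbabilityMeasure.measureReal_eq_coe_coeFn,
    empiricalMeasure_real_apply A N hC.isOpen.measurableSet]

lemma measurePreserving_shift_of_tendsto_empiricalMeasure [U.NeBot] (hU : U ≤ atTop)
    (hμ : Tendsto (empiricalMeasure A) U (𝓝 μ)) (g : Fin ℓ → ℤ) :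
    MeasurePreserving (shift g) (μ : Measure (FullShift ℓ)) μ := by
  refine ⟨(shift g).measurable, ext_of_generate_finite _ borel_eq_generateFrom_isClopen
    (fun C hC D hD _ => hC.inter hD) (fun C hC => ?_) ?_⟩
  · rw [Measure.map_apply (shift g).measurable hC.isOpen.measurableSet,
      ← measureReal_eq_measureReal_iff]
    have hshifted := tendsto_boxDensity_of_tendsto_empiricalMeasure hμ
      (hC.preimage (continuous_shift g))
    rw [shiftedIndicator_preimage_shift_preimage] at hshifted
    have hdiff := (tendsto_boxDensity_preimage_add_sub (shiftedIndicator A ⁻¹' C) g).mono_left hU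
    refine tendsto_nhds_unique hshifted ?_
    simpa using (tendsto_boxDensity_of_tendsto_empiricalMeasure hμ hC).add hdiff
  · rw [Measure.map_apply (shift g).measurable MeasurableSet.univ, Set.preimage_univ]

end Limit

end Furstenberg

open Furstenberg in
/-- **Furstenberg's correspondence principle.** For every `A ⊆ ℤ^ℓ` there is a probability
space together with commuting invertible measure-preserving transformations `T 1, …, T ℓ`
and a measurable set `E` such that `d̄(A) = μ(E)` and, for all `n 1, …, n k ∈ ℤ^ℓ`,
`d̄(A ∩ (A - n 1) ∩ ⋯ ∩ (A - n k)) ≥ μ(E ∩ (T^{n 1})⁻¹E ∩ ⋯ ∩ (T^{n k})⁻¹E)`. -/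
theorem furstenberg_correspondence (k ℓ : ℕ) (A : Set (Fin ℓ → ℤ)) :
    ∃ (X : Type) (mX : MeasurableSpace X) (μ : Measure X) (T : Fin ℓ → X ≃ᵐ X) (E : Set X),
      IsProbabilityMeasure μ ∧
      (∀ j, MeasurePreserving (⇑(T j)) μ μ) ∧
      (∀ i j, Commute (T i) (T j)) ∧
      MeasurableSet E ∧
      upperDensityZ ℓ A = (μ E).toReal ∧
      (∀ n : Fin k → Fin ℓ → ℤ,
        (μ (E ∩ ⋂ i, (⇑((List.ofFn fun j => T j ^ n i j).prod)) ⁻¹' E)).toReal ≤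
          upperDensityZ ℓ (A ∩ ⋂ i, {m : Fin ℓ → ℤ | m + n i ∈ A})) := by
  obtain ⟨U, hU, hA⟩ := mapClusterPt_iff_ultrafilter.1
    (MapClusterPt.limsup (isCoboundedUnder_le_boxDensity A) (isBoundedUnder_le_boxDensity A))
  set μ := (U.map (empiricalMeasure A)).lim
  have hμ : Tendsto (empiricalMeasure A) U (𝓝 μ) := (U.map (empiricalMeasure A)).le_nhds_lim
  refine ⟨FullShift ℓ, inferInstance, μ, fun j => shiftHom ℓ (.ofAdd (Pi.single j 1)),
    zeroCylinder ℓ, inferInstance,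
    fun j => measurePreserving_shift_of_tendsto_empiricalMeasure hU hμ _,
    fun i j => (Commute.all _ _).map _, isClopen_zeroCylinder.isOpen.measurableSet, ?_,
    fun n => ?_⟩
  · have hlim := tendsto_boxDensity_of_tendsto_empiricalMeasure hμ isClopen_zeroCylinder
    rw [shiftedIndicator_preimage_zeroCylinder] at hlim
    rw [upperDensityZ_eq_limsup_boxDensity]
    exact tendsto_nhds_unique hA hlim
  · simp_rw [MonoidHom.list_prod_ofFn_zpow_single, shiftHom_ofAdd]
    have hC : IsClopen (zeroCylinder ℓ ∩ ⋂ i, shift (n i) ⁻¹' zeroCylinder ℓ) :=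
      isClopen_zeroCylinder.inter (isClopen_iInter_of_finite fun i =>
        isClopen_zeroCylinder.preimage (continuous_shift _))
    have hlim := tendsto_boxDensity_of_tendsto_empiricalMeasure hμ hC
    simp only [Set.preimage_inter, Set.preimage_iInter, shiftedIndicator_preimage_shift_preimage,
      shiftedIndicator_preimage_zeroCylinder] at hlim
    rw [upperDensityZ_eq_limsup_boxDensity]
    exact (mapClusterPt_iff_ultrafilter.2 ⟨U, hU, hlim⟩).le_limsup (isBoundedUnder_le_boxDensity _)
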